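/- arXiv:2308.14487 — 2 statements merged into one kernel-verified Lean document; each statement's English description precedes it below -/
import Mathlib

section
/- Let b, σ ∈ ℝ. There exists a constant C > 0, depending only on b and σ, such that for every three times continuously differentiable function U : ℝ → ℝ with |U''(t)| ≤ M₂ and |U'''(t)| ≤ M₃ for all t ∈ ℝ, every x ∈ ℝ and every h ∈ (0, 1], one has |∫ U(x + b·h + σ·w) · w dγ_h(w) − σ·h·U'(x)| ≤ C·(M₂ + M₃)·h², where γ_h is the Gaussian measure on ℝ with mean 0 and variance h. -/
open MeasureTheory ProbabilityTheory
open scoped NNReal Nat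

/-!
Expand `U (z + σ w)` to second order about `z = x + b h`. Integrated against `w dγ_h(w)`, the
Taylor polynomial gives exactly `σ h U'(z)`, since the first and third Gaussian moments vanish and
the second is `h`. The Lagrange remainder is at most `M₃ |σ|³ |w|³ / 6`, so it contributes at most
`M₃ |σ|³ E[w⁴] / 6`, and `E[w⁴]` is `h²` times the fourth moment of `γ₁` by scaling. Finally
`|U'(z) - U'(x)| ≤ M₂ |b| h`.
-/

theorem taylorWithinEval_uIcc_eq_sum {f : ℝ → ℝ} {n : ℕ} (hf : ContDiff ℝ n f) {x₀ x : ℝ}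
    (hx : x₀ ≠ x) :
    taylorWithinEval f n (Set.uIcc x₀ x) x₀ x =
      ∑ k ∈ Finset.range (n + 1), iteratedDeriv k f x₀ * (x - x₀) ^ k / k ! := by
  rw [taylor_within_apply]
  refine Finset.sum_congr rfl fun k hk => ?_
  rw [iteratedDerivWithin_eq_iteratedDeriv (uniqueDiffOn_uIcc hx)
    ((hf.of_le (by exact_mod_cast Finset.mem_range_succ_iff.mp hk)).contDiffAt) Set.left_mem_uIcc,
    smul_eq_mul]
  ring

theorem abs_sub_sum_iteratedDeriv_le {f : ℝ → ℝ} {n : ℕ} (hf : ContDiff ℝ (n + 1) f) {M : ℝ}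
    (hM : ∀ t, |iteratedDeriv (n + 1) f t| ≤ M) (x₀ x : ℝ) :
    |f x - ∑ k ∈ Finset.range (n + 1), iteratedDeriv k f x₀ * (x - x₀) ^ k / k !|
      ≤ M * |x - x₀| ^ (n + 1) / (n + 1)! := by
  rcases eq_or_ne x₀ x with rfl | hx
  · simp [Finset.sum_range_succ']
  obtain ⟨t, -, ht⟩ := taylor_mean_remainder_lagrange_iteratedDeriv hx hf.contDiffOn
  rw [← taylorWithinEval_uIcc_eq_sum (hf.of_le (by norm_cast; omega)) hx, ht, abs_div, abs_mul,
    abs_pow, Nat.abs_cast]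
  gcongr
  exact hM t

theorem abs_sub_taylor_two_le {f : ℝ → ℝ} (hf : ContDiff ℝ 3 f) {M : ℝ}
    (hM : ∀ t, |iteratedDeriv 3 f t| ≤ M) (x s : ℝ) :
    |f (x + s) - (f x + deriv f x * s + iteratedDeriv 2 f x / 2 * s ^ 2)| ≤ M / 6 * |s| ^ 3 := by
  have := abs_sub_sum_iteratedDeriv_le (n := 2) hf hM x (x + s)
  simp only [Finset.sum_range_succ, Finset.sum_range_zero, add_sub_cancel_left] at this
  convert this using 2 <;> norm_num [Nat.factorial] <;> ring

theorem abs_deriv_sub_deriv_le {f : ℝ → ℝ} (hf : ContDiff ℝ 2 f) {M : ℝ}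
    (hM : ∀ t, |iteratedDeriv 2 f t| ≤ M) (x y : ℝ) :
    |deriv f y - deriv f x| ≤ M * |y - x| := by
  have := abs_sub_sum_iteratedDeriv_le (n := 0) (hf.deriv' (n := 1)) (M := M)
    (by simpa [← iteratedDeriv_succ'] using hM) x y
  simpa using this

section GaussianMoments

variable {μ : ℝ} {v : ℝ≥0}

theorem integrable_pow_gaussianReal (k : ℕ) : Integrable (fun x : ℝ => x ^ k) (gaussianReal μ v) :=
  (memLp_id_gaussianReal k).integrable_norm_pow'.mono' (by fun_prop)
    (.of_forall fun x => by simp [norm_pow])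

theorem integral_pow_gaussianReal_of_odd {k : ℕ} (hk : Odd k) :
    ∫ x, x ^ k ∂gaussianReal 0 v = 0 := by
  have h : ∫ x, x ^ k ∂(gaussianReal 0 v).map (fun x ↦ -x) = ∫ x, (-x) ^ k ∂gaussianReal 0 v :=
    integral_map (by fun_prop) (by fun_prop)
  rw [gaussianReal_map_neg, neg_zero] at h
  simp only [hk.neg_pow, integral_neg] at h
  linarith

theorem integral_sq_gaussianReal : ∫ x, x ^ 2 ∂gaussianReal 0 v = v := by
  rw [← variance_fun_id_gaussianReal (μ := 0),
    variance_of_integral_eq_zero aemeasurable_id' integral_id_gaussianReal]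

theorem integral_pow_two_mul_gaussianReal (k : ℕ) :
    ∫ x, x ^ (2 * k) ∂gaussianReal 0 v = v ^ k * ∫ x, x ^ (2 * k) ∂gaussianReal 0 1 := by
  have hmap : (gaussianReal 0 1).map (√(v : ℝ) * ·) = gaussianReal 0 v := by
    rw [gaussianReal_map_const_mul, mul_zero, mul_one]
    congr
    exact Real.sq_sqrt v.coe_nonneg
  rw [← hmap, integral_map (by fun_prop) (by fun_prop), ← integral_const_mul]
  simp_rw [mul_pow, pow_mul, Real.sq_sqrt v.coe_nonneg]

theorem integral_cubic_gaussianReal (a₁ a₂ a₃ : ℝ) :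
    ∫ x, (a₁ * x + a₂ * x ^ 2 + a₃ * x ^ 3) ∂gaussianReal 0 v = a₂ * v := by
  have hpow := integrable_pow_gaussianReal (μ := 0) (v := v)
  have hid : Integrable (fun x : ℝ => x) (gaussianReal 0 v) := by simpa using hpow 1
  rw [integral_add ((hid.const_mul a₁).fun_add ((hpow 2).const_mul a₂)) ((hpow 3).const_mul a₃),
    integral_add (hid.const_mul a₁) ((hpow 2).const_mul a₂), integral_const_mul,
    integral_const_mul, integral_const_mul, integral_id_gaussianReal, integral_sq_gaussianReal,
    integral_pow_gaussianReal_of_odd (by decide)]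
  ring

end GaussianMoments

theorem integrable_mul_id_and_abs_integral_le {μ : Measure ℝ} {R : ℝ → ℝ} {c : ℝ}
    (hR : AEStronglyMeasurable R μ) (h4 : Integrable (fun x : ℝ => x ^ 4) μ)
    (hRc : ∀ x, |R x| ≤ c * |x| ^ 3) :
    Integrable (fun x => R x * x) μ ∧ |∫ x, R x * x ∂μ| ≤ c * ∫ x, x ^ 4 ∂μ := by
  have hbound (x : ℝ) : ‖R x * x‖ ≤ c * x ^ 4 := by
    rw [Real.norm_eq_abs, abs_mul, ← Even.pow_abs (by decide : Even 4)]
    nlinarith [hRc x, abs_nonneg x]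
  refine ⟨(h4.const_mul c).mono' (hR.mul aestronglyMeasurable_id) (.of_forall hbound), ?_⟩
  rw [← integral_const_mul, ← Real.norm_eq_abs]
  exact norm_integral_le_of_norm_le (h4.const_mul c) (.of_forall hbound)

theorem abs_integral_mul_id_gaussianReal_sub_le {f : ℝ → ℝ} (hf : Continuous f) (v : ℝ≥0)
    {a₀ a₁ a₂ c : ℝ} (hfc : ∀ x, |f x - (a₀ + a₁ * x + a₂ * x ^ 2)| ≤ c * |x| ^ 3) :
    |∫ x, f x * x ∂gaussianReal 0 v - a₁ * v| ≤ c * v ^ 2 * ∫ x, x ^ 4 ∂gaussianReal 0 1 := by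
  set R : ℝ → ℝ := fun x => f x - (a₀ + a₁ * x + a₂ * x ^ 2)
  obtain ⟨hRint, hRle⟩ := integrable_mul_id_and_abs_integral_le (μ := gaussianReal 0 v) (R := R)
    (by fun_prop) (integrable_pow_gaussianReal 4) hfc
  have hcubic : Integrable (fun x => a₀ * x + a₁ * x ^ 2 + a₂ * x ^ 3) (gaussianReal 0 v) := by
    have hpow := integrable_pow_gaussianReal (μ := 0) (v := v)
    simpa using (((hpow 1).const_mul a₀).fun_add ((hpow 2).const_mul a₁)).fun_add
      ((hpow 3).const_mul a₂)
  have hsplit : (fun x => f x * x) = fun x => (a₀ * x + a₁ * x ^ 2 + a₂ * x ^ 3) + R x * x := by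
    ext x; simp only [R]; ring
  rw [hsplit, integral_add hcubic hRint, integral_cubic_gaussianReal, add_sub_cancel_left,
    mul_assoc, ← integral_pow_two_mul_gaussianReal 2]
  exact hRle

/-- Third-order Gaussian Taylor estimate: there is a constant `C > 0` depending
only on `b` and `σ` such that for every `C³` function `U : ℝ → ℝ` with second
derivative bounded by `M₂` and third derivative bounded by `M₃`, every `x ∈ ℝ`
and every `h ∈ (0, 1]`,
`|∫ U(x + b h + σ w) w dγ_h(w) − σ h U'(x)| ≤ C (M₂ + M₃) h²`,
where `γ_h` is the Gaussian measure on `ℝ` with mean `0` and variance `h`. -/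
theorem gaussian_autodiff_taylor_estimate (b σ : ℝ) :
    ∃ C > (0 : ℝ), ∀ (M₂ M₃ : ℝ) (U : ℝ → ℝ), ContDiff ℝ 3 U →
      (∀ t : ℝ, |iteratedDeriv 2 U t| ≤ M₂) →
      (∀ t : ℝ, |iteratedDeriv 3 U t| ≤ M₃) →
      ∀ (x h : ℝ), 0 < h → h ≤ 1 →
        |(∫ w, U (x + b * h + σ * w) * w ∂(gaussianReal 0 h.toNNReal))
            - σ * h * deriv U x|
          ≤ C * (M₂ + M₃) * h ^ 2 := by
  set K := ∫ w, w ^ 4 ∂gaussianReal 0 1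
  have hK : 0 ≤ K := integral_nonneg fun w => by positivity
  refine ⟨|σ| * |b| + |σ| ^ 3 * K + 1, by positivity, ?_⟩
  intro M₂ M₃ U hU h2 h3 x h hh _
  have hM₂ : 0 ≤ M₂ := (abs_nonneg _).trans (h2 0)
  have hM₃ : 0 ≤ M₃ := (abs_nonneg _).trans (h3 0)
  set z := x + b * h
  have htaylor (w : ℝ) : |U (z + σ * w) - (U z + deriv U z * σ * w
      + iteratedDeriv 2 U z * σ ^ 2 / 2 * w ^ 2)| ≤ M₃ * |σ| ^ 3 / 6 * |w| ^ 3 := by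
    have := abs_sub_taylor_two_le hU h3 z (σ * w)
    rw [abs_mul] at this
    convert this using 1 <;> ring_nf
  have hgauss := abs_integral_mul_id_gaussianReal_sub_le (f := fun w => U (z + σ * w))
    (hU.continuous.comp (by fun_prop)) h.toNNReal htaylor
  rw [Real.coe_toNNReal _ hh.le] at hgauss
  have hderiv : |deriv U z - deriv U x| ≤ M₂ * (|b| * h) := by
    simpa [z, abs_mul, abs_of_pos hh] using abs_deriv_sub_deriv_le (hU.of_le (by norm_num)) h2 x z
  calc |∫ w, U (z + σ * w) * w ∂gaussianReal 0 h.toNNReal - σ * h * deriv U x|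
      = |(∫ w, U (z + σ * w) * w ∂gaussianReal 0 h.toNNReal - deriv U z * σ * h)
          + σ * h * (deriv U z - deriv U x)| := by ring_nf
    _ ≤ |∫ w, U (z + σ * w) * w ∂gaussianReal 0 h.toNNReal - deriv U z * σ * h|
        + |σ * h * (deriv U z - deriv U x)| := abs_add_le _ _
    _ ≤ M₃ * |σ| ^ 3 / 6 * h ^ 2 * K + |σ| * h * (M₂ * (|b| * h)) := by
        rw [abs_mul, abs_mul, abs_of_pos hh]
        gcongr
    _ ≤ (|σ| * |b| + |σ| ^ 3 * K + 1) * (M₂ + M₃) * h ^ 2 := by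
        have : 0 ≤ h ^ 2 * (|σ| * |b| * M₃ + |σ| ^ 3 * K * M₂ + 5 / 6 * |σ| ^ 3 * K * M₃
          + M₂ + M₃) := by positivity
        linarith
end

section
/- Let (Ω, F, P) be a probability space, G a sub-σ-algebra of F, h > 0 and d ≥ 1. Let W : Ω → ℝ^d be F-measurable with ‖W‖ square integrable, with conditional expectation E[W_j | G] = 0 almost surely for each coordinate j = 1,…,d, and with E[‖W‖² | G] = d·h almost surely. Let A : Ω → ℝ be square integrable, and define Z_j := (1/h)·E[W_j · A | G] for j = 1,…,d. Then h · E[Σ_{j=1}^d Z_j²] ≤ d · ( E[A²] − E[(E[A | G])²] ). -/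
/-!
Replacing `A` by `A - E[A | G]` does not change `E[W_j A | G]`, because `E[W_j | G] = 0` and
`E[A | G]` can be pulled out of the conditional expectation. The conditional Cauchy–Schwarz
inequality then bounds `∑ j, E[W_j A | G]²` by `E[‖W‖² | G] · Var[A | G] = d h · Var[A | G]`,
and integrating the conditional variance gives `E[A²] - E[(E[A | G])²]`.
-/

open MeasureTheory
open ProbabilityTheory

lemma sq_le_mul_of_forall_rat_quadratic_nonneg {a b c : ℝ}
    (h : ∀ q : ℚ, 0 ≤ a * (q : ℝ) ^ 2 + 2 * b * q + c) : b ^ 2 ≤ a * c := by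
  have hreal (t : ℝ) : 0 ≤ a * (t * t) + 2 * b * t + c :=
    Rat.denseRange_cast.induction_on t (isClosed_le continuous_const (by fun_prop))
      fun q => by simpa [sq] using h q
  have := discrim_le_zero hreal
  rw [discrim] at this
  linarith

section CondExp

variable {Ω : Type*} {m m₀ : MeasurableSpace Ω} {μ : Measure Ω}

lemma MeasureTheory.MemLp.euclideanSpace_apply {ι : Type*} [Fintype ι]
    {W : Ω → EuclideanSpace ℝ ι} (hW : MemLp W 2 μ) (i : ι) : MemLp (fun ω => W ω i) 2 μ :=
  (EuclideanSpace.proj (𝕜 := ℝ) i).comp_memLp' hW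

theorem condExp_mul_sq_le {X Y : Ω → ℝ} (hX : MemLp X 2 μ) (hY : MemLp Y 2 μ) :
    ∀ᵐ ω ∂μ, (μ[X * Y | m] ω) ^ 2 ≤ μ[X ^ 2 | m] ω * μ[Y ^ 2 | m] ω := by
  have hX2 : Integrable (X ^ 2) μ := hX.integrable_sq
  have hY2 : Integrable (Y ^ 2) μ := hY.integrable_sq
  have hXY : Integrable (X * Y) μ := hX.integrable_mul hY
  -- Only countably many `q` can be handled almost surely at once, hence rational coefficients.
  have hquad (q : ℚ) : ∀ᵐ ω ∂μ,
      0 ≤ μ[X ^ 2 | m] ω * (q : ℝ) ^ 2 + 2 * μ[X * Y | m] ω * q + μ[Y ^ 2 | m] ω := by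
    have hexp : (fun ω => ((q : ℝ) * X ω + Y ω) ^ 2)
        = ((q : ℝ) ^ 2 • X ^ 2 + (2 * (q : ℝ)) • (X * Y)) + Y ^ 2 := by
      ext ω
      simp only [Pi.add_apply, Pi.smul_apply, Pi.pow_apply, Pi.mul_apply, smul_eq_mul]
      ring
    filter_upwards [condExp_nonneg (m := m) (ae_of_all μ fun ω => sq_nonneg ((q : ℝ) * X ω + Y ω)),
      condExp_add ((hX2.smul ((q : ℝ) ^ 2)).add (hXY.smul (2 * (q : ℝ)))) hY2 m,
      condExp_add (hX2.smul ((q : ℝ) ^ 2)) (hXY.smul (2 * (q : ℝ))) m,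
      condExp_smul ((q : ℝ) ^ 2) (X ^ 2) m, condExp_smul (2 * (q : ℝ)) (X * Y) m]
      with ω hnonneg hadd₁ hadd₂ hsmul₁ hsmul₂
    rw [hexp] at hnonneg
    simp only [Pi.zero_apply, Pi.add_apply, Pi.smul_apply, smul_eq_mul] at hnonneg hadd₁ hadd₂ hsmul₁ hsmul₂
    linarith
  filter_upwards [ae_all_iff.2 hquad] with ω hω
  exact sq_le_mul_of_forall_rat_quadratic_nonneg hω

theorem sum_condExp_mul_sq_le {ι : Type*} [Fintype ι] {W : Ω → EuclideanSpace ℝ ι} {Y : Ω → ℝ}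
    (hW : MemLp W 2 μ) (hY : MemLp Y 2 μ) :
    ∀ᵐ ω ∂μ, ∑ i, (μ[(fun ω => W ω i) * Y | m] ω) ^ 2
      ≤ μ[fun ω => ‖W ω‖ ^ 2 | m] ω * μ[Y ^ 2 | m] ω := by
  have hWi := hW.euclideanSpace_apply
  have hnorm : (fun ω => ‖W ω‖ ^ 2) = ∑ i, (fun ω => W ω i) ^ 2 := by
    ext ω; simp [EuclideanSpace.real_norm_sq_eq]
  rw [hnorm]
  filter_upwards [condExp_finsetSum (s := .univ) (f := fun i => (fun ω => W ω i) ^ 2)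
      (fun i _ => (hWi i).integrable_sq) m,
    ae_all_iff.2 fun i => condExp_mul_sq_le (m := m) (hWi i) hY] with ω hsum hcs
  rw [hsum, Finset.sum_apply, Finset.sum_mul]
  exact Finset.sum_le_sum fun i _ => hcs i

theorem condExp_mul_sub_condExp_ae_eq [IsFiniteMeasure μ] {V A : Ω → ℝ}
    (hV0 : μ[V | m] =ᵐ[μ] 0) (hV : MemLp V 2 μ) (hA : MemLp A 2 μ) :
    μ[V * (A - μ[A | m]) | m] =ᵐ[μ] μ[V * A | m] := by
  have hgV : Integrable (μ[A | m] * V) μ := (hA.condExp one_le_two).integrable_mul hV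
  have hpull : μ[μ[A | m] * V | m] =ᵐ[μ] μ[A | m] * μ[V | m] :=
    condExp_mul_of_stronglyMeasurable_left stronglyMeasurable_condExp hgV
      (hV.integrable one_le_two)
  rw [show V * (A - μ[A | m]) = V * A - μ[A | m] * V by ring]
  filter_upwards [condExp_sub (hV.integrable_mul hA) hgV m, hpull, hV0] with ω hsub hpull hV0
  simp [hsub, hpull, hV0]

theorem integral_condVar [IsFiniteMeasure μ] (hm : m ≤ m₀) {A : Ω → ℝ} (hA : MemLp A 2 μ) :
    ∫ ω, Var[A; μ | m] ω ∂μ = ∫ ω, A ω ^ 2 ∂μ - ∫ ω, (μ[A | m] ω) ^ 2 ∂μ := by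
  rw [integral_congr_ae (condVar_ae_eq_condExp_sq_sub_sq_condExp hm hA)]
  simp only [Pi.sub_apply, Pi.pow_apply]
  rw [integral_sub integrable_condExp (hA.condExp one_le_two).integrable_sq, integral_condExp hm]
  rfl

end CondExp

theorem conditional_cauchy_schwarz_Z_bound_general
    {Ω : Type*} [m0 : MeasurableSpace Ω] (P : Measure Ω) [IsProbabilityMeasure P]
    (G : MeasurableSpace Ω) (hG : G ≤ m0)
    (h : ℝ) (hh : 0 < h) (d : ℕ)
    (W : Ω → EuclideanSpace ℝ (Fin d)) (hW : MemLp W 2 P)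
    (hW0 : ∀ j : Fin d, P[fun ω => W ω j | G] =ᵐ[P] 0)
    (hWvar : P[fun ω => ‖W ω‖ ^ 2 | G] =ᵐ[P] fun _ => (d : ℝ) * h)
    (A : Ω → ℝ) (hA : MemLp A 2 P)
    (Z : Fin d → Ω → ℝ)
    (hZ : ∀ j, Z j = fun ω => (1 / h) * (P[fun ω' => W ω' j * A ω' | G]) ω) :
    h * ∫ ω, ∑ j, (Z j ω) ^ 2 ∂P
      ≤ d * ((∫ ω, (A ω) ^ 2 ∂P) - ∫ ω, ((P[A | G]) ω) ^ 2 ∂P) := by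
  have hbound : ∀ᵐ ω ∂P, ∑ j, (P[fun ω' => W ω' j * A ω' | G] ω) ^ 2
      ≤ d * h * Var[A; P | G] ω := by
    filter_upwards [sum_condExp_mul_sq_le hW (hA.sub (hA.condExp (m := G) one_le_two)), hWvar,
      ae_all_iff.2 fun j => condExp_mul_sub_condExp_ae_eq (hW0 j) (hW.euclideanSpace_apply j) hA]
      with ω hsum hvar hshift
    rw [hvar] at hsum
    simp only [hshift] at hsum
    exact hsum
  calc h * ∫ ω, ∑ j, (Z j ω) ^ 2 ∂P
      = h⁻¹ * ∫ ω, ∑ j, (P[fun ω' => W ω' j * A ω' | G] ω) ^ 2 ∂P := by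
        simp only [hZ, mul_pow, ← Finset.mul_sum, integral_const_mul]
        field_simp
    _ ≤ h⁻¹ * ∫ ω, d * h * Var[A; P | G] ω ∂P := by
        refine mul_le_mul_of_nonneg_left ?_ (by positivity)
        exact integral_mono_of_nonneg (ae_of_all P fun ω => by positivity)
          (integrable_condVar.const_mul _) hbound
    _ = d * ((∫ ω, (A ω) ^ 2 ∂P) - ∫ ω, ((P[A | G]) ω) ^ 2 ∂P) := by
        rw [integral_const_mul, integral_condVar hG hA]
        field_simp

/-- Conditional Cauchy–Schwarz estimate: if `W : Ω → ℝ^d` is square integrable with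
`E[W_j | G] = 0` a.s. for each coordinate and `E[‖W‖² | G] = d h` a.s., and
`A : Ω → ℝ` is square integrable, then the variables `Z_j = (1/h) E[W_j A | G]`
satisfy `h E[∑ j, Z_j²] ≤ d (E[A²] − E[(E[A | G])²])`. -/
theorem conditional_cauchy_schwarz_Z_bound
    {Ω : Type*} [m0 : MeasurableSpace Ω] (P : Measure Ω) [IsProbabilityMeasure P]
    (G : MeasurableSpace Ω) (hG : G ≤ m0)
    (h : ℝ) (hh : 0 < h) (d : ℕ) (hd : 1 ≤ d)
    (W : Ω → EuclideanSpace ℝ (Fin d)) (hW : MemLp W 2 P)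
    (hW0 : ∀ j : Fin d, P[fun ω => W ω j | G] =ᵐ[P] 0)
    (hWvar : P[fun ω => ‖W ω‖ ^ 2 | G] =ᵐ[P] fun _ => (d : ℝ) * h)
    (A : Ω → ℝ) (hA : MemLp A 2 P)
    (Z : Fin d → Ω → ℝ)
    (hZ : ∀ j, Z j = fun ω => (1 / h) * (P[fun ω' => W ω' j * A ω' | G]) ω) :
    h * ∫ ω, ∑ j, (Z j ω) ^ 2 ∂P
      ≤ d * ((∫ ω, (A ω) ^ 2 ∂P) - ∫ ω, ((P[A | G]) ω) ^ 2 ∂P) :=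
  conditional_cauchy_schwarz_Z_bound_general (m0 := m0) P G hG h hh d W hW hW0 hWvar A hA Z hZ
end
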